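/- For any γ > 0 and A_K > 0, the blood flow wave-curve branch function f_K, defined by f_K(A) = 4 ζ (A^{1/4} − A_K^{1/4}) with ζ = √(3γ/2) for 0 < A < A_K and f_K(A) = √(γ (A − A_K)(A^{3/2} − A_K^{3/2})/(A A_K)) for A ≥ A_K, is concave on (0, ∞). -/

import Mathlib

/-!
Left of `AK` the branch is an affine image of the concave map `A ↦ A ^ (1/4)`. Right of `AK` its
radicand factors as `(γ / AK) (A - AK) · (√A - AK √AK / A)`, a product of two nonnegative concave
functions, and the geometric mean `√(u v)` of such functions is concave by Cauchy–Schwarz. Both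
branches vanish at `AK` and lie below their common tangent line there, of slope `ζ AK^(-3/4)`; a
function that is concave on either side of a point and lies below a line through its value at that
point is concave.
-/

/-- Blood flow wave-curve branch function for a state with area `AK`:
rarefaction branch for `A < AK`, shock branch for `A ≥ AK`; here
`ζ = √(3γ/2)`. -/
noncomputable def bfeBranch (γ AK A : ℝ) : ℝ :=
  if A < AK then
    4 * Real.sqrt (3 * γ / 2) * (A ^ ((1 : ℝ) / 4) - AK ^ ((1 : ℝ) / 4))
  else
    Real.sqrt (γ * (A - AK) * (A ^ ((3 : ℝ) / 2) - AK ^ ((3 : ℝ) / 2)) / (A * AK))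

open Set Real

section Gluing

variable {s : Set ℝ} {f : ℝ → ℝ} {a : ℝ}

theorem ConcaveOn.add_affine (hf : ConcaveOn ℝ s f) (d b : ℝ) :
    ConcaveOn ℝ s (fun x => f x + (d * x + b)) := by
  refine ⟨hf.1, fun x hx y hy α β hα hβ hab => ?_⟩
  have h := hf.2 hx hy hα hβ hab
  simp only [smul_eq_mul] at h ⊢
  linear_combination h + b * hab

theorem ConcaveOn.monotoneOn_of_isMaxOn (hf : ConcaveOn ℝ s f) (ha : a ∈ s)
    (hmax : IsMaxOn f s a) : MonotoneOn f (s ∩ Iic a) := by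
  intro x hx y hy hxy
  rcases (mem_Iic.mp hy.2).eq_or_lt with rfl | hya
  · exact hmax hx.1
  · exact hf.left_le_of_le_right'' hx.1 ha hxy hya (hmax hy.1)

theorem ConcaveOn.antitoneOn_of_isMaxOn (hf : ConcaveOn ℝ s f) (ha : a ∈ s)
    (hmax : IsMaxOn f s a) : AntitoneOn f (s ∩ Ici a) := by
  intro x hx y hy hxy
  rcases (mem_Ici.mp hx.2).eq_or_lt with rfl | hax
  · exact hmax hy.1
  · exact hf.right_le_of_le_left'' ha hy.1 hax hxy (hmax hx.1)

theorem concaveOn_of_isMaxOn_of_concaveOn_Iic_Ici (hs : Convex ℝ s) (ha : a ∈ s)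
    (hl : ConcaveOn ℝ (s ∩ Iic a) f) (hr : ConcaveOn ℝ (s ∩ Ici a) f) (hmax : IsMaxOn f s a) :
    ConcaveOn ℝ s f := by
  have hal : a ∈ s ∩ Iic a := ⟨ha, le_refl a⟩
  have har : a ∈ s ∩ Ici a := ⟨ha, le_refl a⟩
  have hmono : MonotoneOn f (s ∩ Iic a) :=
    (hl.monotoneOn_of_isMaxOn hal (hmax.on_subset inter_subset_left)).mono fun x hx => ⟨hx, hx.2⟩
  have hanti : AntitoneOn f (s ∩ Ici a) :=
    (hr.antitoneOn_of_isMaxOn har (hmax.on_subset inter_subset_left)).mono fun x hx => ⟨hx, hx.2⟩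
  -- replace the far endpoint by the maximizer `a`, then return to the combination by monotonicity
  have across : ∀ x ∈ s, x ≤ a → ∀ y ∈ s, a ≤ y → ∀ α β : ℝ, 0 ≤ α → 0 ≤ β → α + β = 1 →
      α * f x + β * f y ≤ f (α * x + β * y) := by
    intro x hx hxa y hy hay α β hα hβ hab
    have hc : α * x + β * y ∈ s := hs hx hy hα hβ hab
    have hfy : f y ≤ f a := hmax hy
    have hfx : f x ≤ f a := hmax hx
    rcases le_total (α * x + β * y) a with hca | hac
    · have hc' : α * x + β * a ∈ s ∩ Iic a :=
        ⟨hs hx ha hα hβ hab, mem_Iic.2 <| by nlinarith [mul_nonneg hα (sub_nonneg.2 hxa)]⟩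
      calc α * f x + β * f y ≤ α * f x + β * f a := by gcongr
        _ ≤ f (α * x + β * a) := by simpa using hl.2 ⟨hx, hxa⟩ hal hα hβ hab
        _ ≤ f (α * x + β * y) :=
          hmono hc' ⟨hc, hca⟩ (by nlinarith [mul_nonneg hβ (sub_nonneg.2 hay)])
    · have hc' : α * a + β * y ∈ s ∩ Ici a :=
        ⟨hs ha hy hα hβ hab, mem_Ici.2 <| by nlinarith [mul_nonneg hβ (sub_nonneg.2 hay)]⟩
      calc α * f x + β * f y ≤ α * f a + β * f y := by gcongr
        _ ≤ f (α * a + β * y) := by simpa using hr.2 har ⟨hy, hay⟩ hα hβ hab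
        _ ≤ f (α * x + β * y) :=
          hanti ⟨hc, hac⟩ hc' (by nlinarith [mul_nonneg hα (sub_nonneg.2 hxa)])
  refine ⟨hs, fun x hx y hy α β hα hβ hab => ?_⟩
  simp only [smul_eq_mul]
  rcases le_total x a with hxa | hax <;> rcases le_total y a with hya | hay
  · simpa using hl.2 ⟨hx, hxa⟩ ⟨hy, hya⟩ hα hβ hab
  · exact across x hx hxa y hy hay α β hα hβ hab
  · rw [add_comm, add_comm (α * x)]
    exact across y hy hya x hx hax β α hβ hα (by rw [add_comm, hab])
  · simpa using hr.2 ⟨hx, hax⟩ ⟨hy, hay⟩ hα hβ hab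

theorem concaveOn_of_le_affine_of_concaveOn_Iic_Ici {d : ℝ} (hs : Convex ℝ s) (ha : a ∈ s)
    (hl : ConcaveOn ℝ (s ∩ Iic a) f) (hr : ConcaveOn ℝ (s ∩ Ici a) f)
    (hle : ∀ x ∈ s, f x ≤ f a + d * (x - a)) : ConcaveOn ℝ s f := by
  have hg : ConcaveOn ℝ s (fun x => f x + (-d * x + d * a)) :=
    concaveOn_of_isMaxOn_of_concaveOn_Iic_Ici hs ha (hl.add_affine _ _) (hr.add_affine _ _)
      (isMaxOn_iff.2 fun x hx => by linarith [hle x hx])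
  exact (hg.add_affine d (-(d * a))).congr fun x _ => by ring

end Gluing

theorem ConcaveOn.sqrt_mul {E : Type*} [AddCommGroup E] [Module ℝ E] {s : Set E} {u v : E → ℝ}
    (hu : ConcaveOn ℝ s u) (hv : ConcaveOn ℝ s v) (hu₀ : ∀ x ∈ s, 0 ≤ u x)
    (hv₀ : ∀ x ∈ s, 0 ≤ v x) : ConcaveOn ℝ s (fun x => √(u x * v x)) := by
  refine ⟨hu.1, fun x hx y hy α β hα hβ hab => ?_⟩
  have hc := hu.1 hx hy hα hβ hab
  simp only [smul_eq_mul]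
  -- Cauchy–Schwarz for the vectors `(√(α u x), √(β u y))` and `(√(α v x), √(β v y))`
  have cauchySchwarz : α * √(u x * v x) + β * √(u y * v y)
      ≤ √((α * u x + β * u y) * (α * v x + β * v y)) := by
    rw [Real.sqrt_mul (hu₀ x hx), Real.sqrt_mul (hu₀ y hy)]
    apply Real.le_sqrt_of_sq_le
    set p := √(u x) with hp
    set q := √(u y) with hq
    set r := √(v x) with hr
    set t := √(v y) with ht
    rw [← Real.sq_sqrt (hu₀ x hx), ← Real.sq_sqrt (hu₀ y hy), ← Real.sq_sqrt (hv₀ x hx),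
      ← Real.sq_sqrt (hv₀ y hy), ← hp, ← hq, ← hr, ← ht]
    nlinarith [mul_nonneg (mul_nonneg hα hβ) (sq_nonneg (p * t - q * r))]
  refine cauchySchwarz.trans (Real.sqrt_le_sqrt ?_)
  have hux := hu.2 hx hy hα hβ hab
  have hvx := hv.2 hx hy hα hβ hab
  simp only [smul_eq_mul] at hux hvx
  exact mul_le_mul hux hvx (by nlinarith [hv₀ x hx, hv₀ y hy]) (hu₀ _ hc)

theorem rpow_three_halves_eq_mul_sqrt {A : ℝ} (hA : 0 ≤ A) : A ^ ((3 : ℝ) / 2) = A * √A := by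
  rw [show (3 : ℝ) / 2 = 1 + 1 / 2 by norm_num, rpow_add' hA (by norm_num), rpow_one,
    ← sqrt_eq_rpow]

theorem concaveOn_rarefaction (γ AK : ℝ) :
    ConcaveOn ℝ (Ici 0)
      (fun A : ℝ => 4 * √(3 * γ / 2) * (A ^ ((1 : ℝ) / 4) - AK ^ ((1 : ℝ) / 4))) :=
  (((concaveOn_rpow (p := (1 : ℝ) / 4) (by norm_num) (by norm_num)).smul
      (by positivity : (0 : ℝ) ≤ 4 * √(3 * γ / 2))).add_affine 0
      (-(4 * √(3 * γ / 2) * AK ^ ((1 : ℝ) / 4)))).congr fun A _ => by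
    simp only [smul_eq_mul]; ring

theorem concaveOn_sqrt_sub_div {c : ℝ} (hc : 0 ≤ c) :
    ConcaveOn ℝ (Ioi 0) (fun A : ℝ => √A - c / A) := by
  have hinv : ConvexOn ℝ (Ioi 0) (fun A : ℝ => c / A) :=
    ((convexOn_zpow (-1)).smul hc).congr fun A _ => by
      simp only [smul_eq_mul, zpow_neg_one, div_eq_mul_inv]
  exact (strictConcaveOn_sqrt.concaveOn.subset Ioi_subset_Ici_self (convex_Ioi 0)).sub hinv

theorem shock_radicand_eq {γ AK A : ℝ} (hAK : 0 < AK) (hA : 0 < A) :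
    γ * (A - AK) * (A ^ ((3 : ℝ) / 2) - AK ^ ((3 : ℝ) / 2)) / (A * AK)
      = γ / AK * (A - AK) * (√A - AK * √AK / A) := by
  rw [rpow_three_halves_eq_mul_sqrt hA.le, rpow_three_halves_eq_mul_sqrt hAK.le]
  field_simp

theorem concaveOn_shock {γ AK : ℝ} (hγ : 0 ≤ γ) (hAK : 0 < AK) :
    ConcaveOn ℝ (Ioi 0 ∩ Ici AK) (fun A : ℝ =>
      √(γ * (A - AK) * (A ^ ((3 : ℝ) / 2) - AK ^ ((3 : ℝ) / 2)) / (A * AK))) := by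
  have hs : Convex ℝ (Ioi (0 : ℝ) ∩ Ici AK) := (convex_Ioi 0).inter (convex_Ici AK)
  have hu : ConcaveOn ℝ (Ioi 0 ∩ Ici AK) (fun A : ℝ => γ / AK * (A - AK)) :=
    ((concaveOn_const 0 hs).add_affine (γ / AK) (-(γ / AK * AK))).congr fun A _ => by ring
  have hv : ConcaveOn ℝ (Ioi 0 ∩ Ici AK) (fun A : ℝ => √A - AK * √AK / A) :=
    (concaveOn_sqrt_sub_div (by positivity)).subset inter_subset_left hs
  refine (hu.sqrt_mul hv (fun A hA => ?_) (fun A hA => ?_)).congr fun A hA => ?_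
  · have := sub_nonneg.2 (mem_Ici.1 hA.2)
    positivity
  · have hA0 : 0 < A := hA.1
    have : AK * √AK ≤ A * √A := mul_le_mul hA.2 (sqrt_le_sqrt hA.2) (sqrt_nonneg _) hA0.le
    rw [sub_nonneg, div_le_iff₀ hA0]
    nlinarith [sqrt_nonneg A, sq_sqrt hA0.le]
  · dsimp only
    rw [shock_radicand_eq hAK hA.1]

theorem rarefaction_le_tangent {γ AK A : ℝ} (hAK : 0 < AK) (hA : 0 ≤ A) :
    4 * √(3 * γ / 2) * (A ^ ((1 : ℝ) / 4) - AK ^ ((1 : ℝ) / 4))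
      ≤ √(3 * γ / 2) / AK ^ ((3 : ℝ) / 4) * (A - AK) := by
  set t := A ^ ((1 : ℝ) / 4)
  set s := AK ^ ((1 : ℝ) / 4)
  have hs : 0 < s := by positivity
  have ht : 0 ≤ t := by positivity
  have hAt : A = t ^ 4 := by rw [← rpow_mul_natCast hA]; norm_num
  have hAKs : AK = s ^ 4 := by rw [← rpow_mul_natCast hAK.le]; norm_num
  have hAK3 : AK ^ ((3 : ℝ) / 4) = s ^ 3 := by rw [← rpow_mul_natCast hAK.le]; norm_num
  rw [hAK3, div_mul_eq_mul_div, le_div_iff₀ (by positivity), hAt, hAKs]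
  -- `t⁴ - s⁴ - 4 s³ (t - s) = (t - s)² (t² + 2 t s + 3 s²)`
  nlinarith [mul_nonneg (sqrt_nonneg (3 * γ / 2))
    (mul_nonneg (sq_nonneg (t - s)) (by positivity : (0 : ℝ) ≤ t ^ 2 + 2 * t * s + 3 * s ^ 2))]

theorem shock_le_tangent {γ AK A : ℝ} (hγ : 0 ≤ γ) (hAK : 0 < AK) (hA : AK ≤ A) :
    √(γ * (A - AK) * (A ^ ((3 : ℝ) / 2) - AK ^ ((3 : ℝ) / 2)) / (A * AK))
      ≤ √(3 * γ / 2) / AK ^ ((3 : ℝ) / 4) * (A - AK) := by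
  have hA0 : 0 < A := hAK.trans_le hA
  have hd2 : (√(3 * γ / 2) / AK ^ ((3 : ℝ) / 4)) ^ 2 = 3 * γ / 2 / (AK * √AK) := by
    rw [div_pow, sq_sqrt (by positivity), ← rpow_natCast, ← rpow_mul hAK.le,
      ← rpow_three_halves_eq_mul_sqrt hAK.le]
    norm_num
  rw [sqrt_le_iff, mul_pow, hd2, rpow_three_halves_eq_mul_sqrt hA0.le,
    rpow_three_halves_eq_mul_sqrt hAK.le]
  refine ⟨by have := sub_nonneg.2 hA; positivity, ?_⟩
  set x := √A
  set c := √AK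
  have hc : 0 < c := sqrt_pos.2 hAK
  have hcx : c ≤ x := sqrt_le_sqrt hA
  have hAx : A = x ^ 2 := (sq_sqrt hA0.le).symm
  have hAKc : AK = c ^ 2 := (sq_sqrt hAK.le).symm
  rw [hAx, hAKc, div_le_iff₀ (by positivity)]
  field_simp
  -- `3 x² (x² - c²) - 2 c (x³ - c³) = (x - c)² (3 x² + 4 c x + 2 c²)`
  nlinarith [mul_nonneg (mul_nonneg hγ (by nlinarith : (0 : ℝ) ≤ x ^ 2 - c ^ 2))
    (mul_nonneg (sq_nonneg (x - c)) (by positivity : (0 : ℝ) ≤ 3 * x ^ 2 + 4 * c * x + 2 * c ^ 2))]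

/-- The blood flow wave-curve branch function is concave on `(0, ∞)`. -/
theorem bfe_branch_concave (γ AK : ℝ) (hγ : 0 < γ) (hAK : 0 < AK) :
    ConcaveOn ℝ (Set.Ioi (0 : ℝ)) (bfeBranch γ AK) := by
  have hs : Convex ℝ (Ioi (0 : ℝ)) := convex_Ioi 0
  have hrare : ConcaveOn ℝ (Ioi 0 ∩ Iic AK) (bfeBranch γ AK) := by
    refine ((concaveOn_rarefaction γ AK).subset (fun A hA => mem_Ici.2 (le_of_lt hA.1))
      (hs.inter (convex_Iic AK))).congr fun A hA => ?_
    rcases (mem_Iic.1 hA.2).lt_or_eq with hlt | rfl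
    · simp [bfeBranch, hlt]
    · simp [bfeBranch]
  have hshock : ConcaveOn ℝ (Ioi 0 ∩ Ici AK) (bfeBranch γ AK) :=
    (concaveOn_shock hγ.le hAK).congr fun A hA => by
      rw [bfeBranch, if_neg (not_lt.2 (mem_Ici.1 hA.2))]
  refine concaveOn_of_le_affine_of_concaveOn_Iic_Ici (d := √(3 * γ / 2) / AK ^ ((3 : ℝ) / 4))
    hs hAK hrare hshock fun A hA => ?_
  rw [show bfeBranch γ AK AK = 0 by simp [bfeBranch], zero_add, bfeBranch]
  split_ifs with h
  · exact rarefaction_le_tangent hAK (le_of_lt hA)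
  · exact shock_le_tangent hγ.le hAK (not_lt.1 h)
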